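/- If t is a nonnegative integer divisible by 3, then the number of 3×3 matrices with nonnegative integer entries such that every row sum, every column sum, and both main diagonal sums equal t is (2/9)t² + (2/3)t + 1. -/

import Mathlib

/-!
A magic square of sum `t = 3 c` has center `c` and is determined by its top-left entries `a, b`;
its entries are nonnegative exactly when `a, b ≤ 2 c` and `2 c ≤ 2 a + b ≤ 4 c`, a region with
`(c + 1)² + c² = 2 t² / 9 + 2 t / 3 + 1` lattice points.
-/

open Finset

def IsMagicSquare (t : ℕ) (M : Matrix (Fin 3) (Fin 3) ℕ) : Prop :=
  (∀ i, ∑ j, M i j = t) ∧ (∀ j, ∑ i, M i j = t) ∧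
    M 0 0 + M 1 1 + M 2 2 = t ∧ M 0 2 + M 1 1 + M 2 0 = t

theorem isMagicSquare_iff {t : ℕ} {M : Matrix (Fin 3) (Fin 3) ℕ} :
    IsMagicSquare t M ↔
      M 0 0 + M 0 1 + M 0 2 = t ∧ M 1 0 + M 1 1 + M 1 2 = t ∧ M 2 0 + M 2 1 + M 2 2 = t ∧
      M 0 0 + M 1 0 + M 2 0 = t ∧ M 0 1 + M 1 1 + M 2 1 = t ∧ M 0 2 + M 1 2 + M 2 2 = t ∧
      M 0 0 + M 1 1 + M 2 2 = t ∧ M 0 2 + M 1 1 + M 2 0 = t := by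
  simp only [IsMagicSquare, Fin.forall_fin_succ, IsEmpty.forall_iff, Fin.sum_univ_three]
  simp only [Fin.succ_zero_eq_one, Fin.succ_one_eq_two, and_true, and_assoc]

def magicSquareOf (c : ℕ) (p : ℕ × ℕ) : Matrix (Fin 3) (Fin 3) ℕ :=
  !![p.1, p.2, 3 * c - p.1 - p.2;
     4 * c - 2 * p.1 - p.2, c, 2 * p.1 + p.2 - 2 * c;
     p.1 + p.2 - c, 2 * c - p.2, 2 * c - p.1]

theorem magicSquareOf_injective (c : ℕ) : Function.Injective (magicSquareOf c) :=
  fun _ _ h => Prod.ext (congrFun (congrFun h 0) 0) (congrFun (congrFun h 0) 1)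

/-- The pairs `(a, b)` for which all entries of `magicSquareOf c (a, b)` are honest
(non-truncated) differences. -/
def cornerPairs (c : ℕ) : Finset (ℕ × ℕ) :=
  (range (2 * c + 1)).biUnion fun a => {a} ×ˢ Icc (2 * c - 2 * a) (min (2 * c) (4 * c - 2 * a))

theorem mem_cornerPairs {c : ℕ} {p : ℕ × ℕ} :
    p ∈ cornerPairs c ↔
      p.1 ≤ 2 * c ∧ p.2 ≤ 2 * c ∧ 2 * c ≤ 2 * p.1 + p.2 ∧ 2 * p.1 + p.2 ≤ 4 * c := by
  obtain ⟨a, b⟩ := p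
  simp only [cornerPairs, mem_biUnion, mem_product, mem_singleton, mem_Icc, mem_range]
  constructor
  · rintro ⟨a, ha, rfl, hb⟩
    omega
  · intro h
    exact ⟨a, by omega, rfl, by omega⟩

theorem isMagicSquare_magicSquareOf {c : ℕ} {p : ℕ × ℕ} (hp : p ∈ cornerPairs c) :
    IsMagicSquare (3 * c) (magicSquareOf c p) := by
  rw [mem_cornerPairs] at hp
  simp only [magicSquareOf, isMagicSquare_iff, Matrix.of_apply, Matrix.cons_val',
    Matrix.cons_val_zero, Matrix.cons_val_fin_one, Matrix.cons_val_one, Matrix.cons_val]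
  omega

/-- The four lines through the center sum to `4 t`, and they cover the whole square once
and the center three more times. -/
theorem IsMagicSquare.three_mul_center {t : ℕ} {M : Matrix (Fin 3) (Fin 3) ℕ}
    (hM : IsMagicSquare t M) : 3 * M 1 1 = t := by
  rw [isMagicSquare_iff] at hM
  omega

theorem IsMagicSquare.eq_magicSquareOf {c : ℕ} {M : Matrix (Fin 3) (Fin 3) ℕ}
    (hM : IsMagicSquare (3 * c) M) :
    (M 0 0, M 0 1) ∈ cornerPairs c ∧ magicSquareOf c (M 0 0, M 0 1) = M := by
  have hc := hM.three_mul_center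
  rw [isMagicSquare_iff] at hM
  refine ⟨mem_cornerPairs.2 (by omega), ?_⟩
  ext i j
  fin_cases i <;> fin_cases j <;>
    simp only [magicSquareOf, Fin.zero_eta, Fin.mk_one, Fin.reduceFinMk, Matrix.of_apply,
      Matrix.cons_val', Matrix.cons_val, Matrix.cons_val_fin_one, Matrix.cons_val_one,
      Matrix.cons_val_zero] <;>
    omega

theorem setOf_isMagicSquare_eq_image (c : ℕ) :
    {M | IsMagicSquare (3 * c) M} = (cornerPairs c).image (magicSquareOf c) := by
  ext M
  simp only [Set.mem_ofPred_eq, coe_image, Set.mem_image, mem_coe]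
  refine ⟨fun hM => ⟨_, hM.eq_magicSquareOf⟩, ?_⟩
  rintro ⟨p, hp, rfl⟩
  exact isMagicSquare_magicSquareOf hp

theorem sum_range_two_mul_add_one (n : ℕ) : ∑ i ∈ range n, (2 * i + 1) = n ^ 2 := by
  induction n with
  | zero => simp
  | succ n ih => rw [sum_range_succ, ih]; ring

/-- Column `a` of `cornerPairs c` has `2 * min a (2 * c - a) + 1` points, so the columns
`a ≤ c` and `a > c` contribute the odd numbers up to `2 c + 1` and up to `2 c - 1`. -/
theorem card_cornerPairs (c : ℕ) : #(cornerPairs c) = (c + 1) ^ 2 + c ^ 2 := by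
  rw [cornerPairs, card_biUnion]
  · simp only [card_product, card_singleton, one_mul, Nat.card_Icc]
    rw [show 2 * c + 1 = (c + 1) + c by ring, sum_range_add, ← sum_range_reflect _ c,
      ← sum_range_two_mul_add_one, ← sum_range_two_mul_add_one]
    congr 1 <;> refine sum_congr rfl fun a ha => ?_ <;> rw [mem_range] at ha <;> omega
  · intro a _ b _ hab
    exact disjoint_product.2 (Or.inl (disjoint_singleton.2 hab))

theorem macmahon_magic_3x3 (t : ℕ) (h : 3 ∣ t) :
    (Set.ncard {M : Matrix (Fin 3) (Fin 3) ℕ |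
      (∀ i, ∑ j, M i j = t) ∧ (∀ j, ∑ i, M i j = t) ∧
      M 0 0 + M 1 1 + M 2 2 = t ∧ M 0 2 + M 1 1 + M 2 0 = t} : ℚ) =
    (2 / 9) * (t : ℚ) ^ 2 + (2 / 3) * (t : ℚ) + 1 := by
  obtain ⟨c, rfl⟩ := h
  change (Set.ncard {M | IsMagicSquare (3 * c) M} : ℚ) = _
  rw [setOf_isMagicSquare_eq_image, Set.ncard_coe_finset,
    card_image_of_injective _ (magicSquareOf_injective c), card_cornerPairs]
  push_cast
  ring
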